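/- Let (X,g,ξ) be a Sasakian manifold and F = ξ^⊥. Then the ℂ-distribution F^{0,1} ⊕ ℂ·ξ ⊂ TX ⊗ ℂ is integrable: the Lie bracket of any two smooth sections of F^{0,1} ⊕ ℂ·ξ is again a section of F^{0,1} ⊕ ℂ·ξ. -/
import Mathlib


/- STATEMENT 12: (X,g,ξ) Sasakian, F = ξ^⊥, F^{0,1} ⊂ F ⊗ ℂ the
(-i)-eigenbundle of Φ|_F.  The distribution F̃^{0,1} = F^{0,1} ⊕ ℂ·ξ inside
TX ⊗ ℂ is integrable: the bracket of two of its sections is again a section.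

Model: R is the ℂ-algebra of smooth ℂ-valued functions on X, W the R-module
of complexified vector fields, with Lie bracket `bracket`, directional
derivative δ, Levi-Civita connection ∇ (extended ℂ-bilinearly), metric g
(extended R-bilinearly), Reeb field ξ, and the complexified endomorphism Φ
(with Φξ = 0, Φ = -∇ξ).  A section v lies in F̃^{0,1} = F^{0,1} ⊕ ℂξ iff
Φ v = -i · (v - g(ξ,v)·ξ)  (its F-component is a (-i)-eigenvector of Φ|_F).
Context facts (torsion-freeness, Leibniz, metric compatibility,
(∇_u Φ)(w) = g(u,w)ξ - g(ξ,w)u, ∇_ξΦ = 0 being the case u = ξ) are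
hypotheses. -/
theorem stmt_12
    (R : Type*) [CommRing R] [Algebra ℂ R]             -- smooth ℂ-functions
    (W : Type*) [AddCommGroup W] [Module R W]          -- fields in TX ⊗ ℂ
    (g : W →ₗ[R] W →ₗ[R] R)                            -- complexified metric
    (hg_symm : ∀ v w : W, g v w = g w v)
    (ξ : W) (hξ_unit : g ξ ξ = 1)
    (bracket : W → W → W)                              -- Lie bracket
    (nabla : W → W → W)                                -- Levi-Civita connection
    (δ : W → R → R)                                    -- directional derivative
    (Φ : W →ₗ[R] W)                                    -- complexified Φ = -∇ξ
    -- torsion-freeness: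
    (htorsion : ∀ v w : W, bracket v w = nabla v w - nabla w v)
    -- Leibniz rule for the connection:
    (hLeibniz : ∀ u (f : R) (w : W), nabla u (f • w) = δ u f • w + f • nabla u w)
    -- directional derivatives kill constants:
    (hconst : ∀ u (c : ℂ), δ u (algebraMap ℂ R c) = 0)
    -- metric compatibility:
    (hcompat : ∀ u v w : W, δ u (g v w) = g (nabla u v) w + g v (nabla u w))
    -- Φ = -∇ξ and Φξ = 0:
    (hΦ : ∀ u : W, nabla u ξ = -(Φ u)) (hΦξ : Φ ξ = 0)
    -- the Sasakian identity (∇_u Φ)(w) = g(u,w)ξ - g(ξ,w)u: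
    (hSasaki : ∀ u w : W,
      nabla u (Φ w) - Φ (nabla u w) = g u w • ξ - g ξ w • u) :
    -- sections of F̃^{0,1} are closed under the Lie bracket:
    ∀ v w : W,
      Φ v = algebraMap ℂ R (-Complex.I) • (v - g ξ v • ξ) →
      Φ w = algebraMap ℂ R (-Complex.I) • (w - g ξ w • ξ) →
      Φ (bracket v w) =
        algebraMap ℂ R (-Complex.I) •
          (bracket v w - g ξ (bracket v w) • ξ) := by
  intro v w hv hw
  set c : R := algebraMap ℂ R (-Complex.I) with hc
  have hδc : ∀ u : W, δ u c = 0 := fun u => hconst u (-Complex.I)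
  have hδ0 : ∀ u : W, δ u (0 : R) = 0 := fun u => by
    simpa using hconst u 0
  have hnabla0 : ∀ u : W, nabla u (0 : W) = 0 := fun u => by
    have h := hLeibniz u 0 ξ
    simpa [hδ0 u] using h
  have hcc : c * c = -1 := by
    rw [hc, ← map_mul, neg_mul_neg, Complex.I_mul_I, map_neg, map_one]
  have hΦΦ : ∀ u : W, Φ (Φ u) = g ξ u • ξ - u := fun u => by
    have hs := hSasaki u ξ
    rw [hΦξ, hnabla0, hΦ u, map_neg] at hs
    simp only [hξ_unit, one_smul, zero_sub, neg_neg] at hs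
    rw [hg_symm u ξ] at hs
    exact hs
  have key : ∀ a b : W, Φ a = c • (a - g ξ a • ξ) → Φ b = c • (b - g ξ b • ξ) →
      Φ (nabla a b) = c • nabla a b - (c * δ a (g ξ b)) • ξ
        + (g ξ a * g ξ b) • ξ - g a b • ξ ∧
      g ξ (nabla a b) = δ a (g ξ b) + c * (g a b - g ξ a * g ξ b) := by
    intro a b ha hb
    have hgb' : g ξ (b - g ξ b • ξ) = 0 := by
      simp [hξ_unit, smul_eq_mul]
    have hgab' : g a (b - g ξ b • ξ) = g a b - g ξ a * g ξ b := by
      simp only [map_sub, map_smul, smul_eq_mul]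
      rw [hg_symm a ξ]
      ring
    have hΦb' : Φ (b - g ξ b • ξ) = Φ b := by
      simp [hΦξ]
    have hP : nabla a (Φ b) = c • nabla a (b - g ξ b • ξ) := by
      rw [hb, hLeibniz, hδc, zero_smul, zero_add]
    have h1 := hSasaki a b
    have h3 := hSasaki a (b - g ξ b • ξ)
    rw [hΦb', hP, hgb', hgab', zero_smul, sub_zero] at h3
    rw [hP] at h1
    have hgN : g ξ (nabla a b) = δ a (g ξ b) + c * (g a b - g ξ a * g ξ b) := by
      have hcm := hcompat a ξ b
      rw [hΦ a, ha] at hcm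
      simp only [map_neg, map_sub, map_smul, LinearMap.neg_apply, LinearMap.sub_apply,
        LinearMap.smul_apply, smul_eq_mul] at hcm
      linear_combination -hcm
    have hgP : g ξ (nabla a (b - g ξ b • ξ)) = c * (g a b - g ξ a * g ξ b) := by
      have hcm := hcompat a ξ (b - g ξ b • ξ)
      rw [hgb', hδ0, hΦ a, ha] at hcm
      simp only [map_neg, map_sub, map_smul, LinearMap.neg_apply, LinearMap.sub_apply,
        LinearMap.smul_apply, smul_eq_mul, hξ_unit, hg_symm a ξ] at hcm
      linear_combination -hcm
    have hAΦ : Φ (nabla a b - nabla a (b - g ξ b • ξ))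
        = g ξ b • a - (g ξ a * g ξ b) • ξ := by
      rw [map_sub]
      linear_combination (norm := module) h3 - h1
    have hgA : g ξ (nabla a b - nabla a (b - g ξ b • ξ)) = δ a (g ξ b) := by
      rw [map_sub, hgN, hgP]
      ring
    have hA : nabla a b - nabla a (b - g ξ b • ξ)
        = δ a (g ξ b) • ξ - (c * g ξ b) • (a - g ξ a • ξ) := by
      have h8 := hΦΦ (nabla a b - nabla a (b - g ξ b • ξ))
      rw [hAΦ, hgA] at h8
      rw [map_sub, map_smul, map_smul, hΦξ, smul_zero, sub_zero, ha] at h8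
      linear_combination (norm := module) h8
    refine ⟨?_, hgN⟩
    have e1 : c • nabla a b - c • nabla a (b - g ξ b • ξ)
        = (c * δ a (g ξ b)) • ξ - (c * c * g ξ b) • (a - g ξ a • ξ) := by
      linear_combination (norm := module) c • hA
    rw [hcc] at e1
    linear_combination (norm := module) -h1 - e1
  obtain ⟨k1, k1g⟩ := key v w hv hw
  obtain ⟨k2, k2g⟩ := key w v hw hv
  rw [htorsion v w, map_sub, map_sub, k1, k2, k1g, k2g, hg_symm w v]
  module
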